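/- Let X be an event with positive probability and let n⁺, n⁻, n be integer-valued random variables such that conditionally on X and on the values of n⁺ and n⁻ (with n⁻ ≤ 0 ≤ n⁺), n is uniform on {n⁻, ..., n⁺}, and conditionally on X and on the value of n⁺ - n⁻, n⁺ is uniform on {0, ..., n⁺ - n⁻}. Then E[(n⁺+1)·1_X·1_{n<0}] = (1/6)·E[(n⁺-n⁻+2)·(n⁺-n⁻)/(n⁺-n⁻+1) · 1_X]. -/
import Mathlib

open MeasureTheory

lemma icc_insert (k : ℤ) (hk : 0 ≤ k) :
    Finset.Icc (0:ℤ) (k+1) = insert (k+1) (Finset.Icc (0:ℤ) k) := by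
  ext x; simp only [Finset.mem_Icc, Finset.mem_insert]; omega

lemma aux_sum_gauss : ∀ k : ℤ, 0 ≤ k →
    ∑ b ∈ Finset.Icc (0:ℤ) k, ((b:ℝ)+1) = ((k:ℝ)+1)*((k:ℝ)+2)/2 := by
  refine Int.le_induction ?_ ?_
  · norm_num
  · intro k hk ih
    rw [icc_insert k hk, Finset.sum_insert (by simp)]
    rw [ih]; push_cast; ring

lemma aux_sum_cubic : ∀ k : ℤ, 0 ≤ k →
    ∑ b ∈ Finset.Icc (0:ℤ) k, ((b:ℝ)+1)*((k:ℝ)-(b:ℝ))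
      = (k:ℝ)*((k:ℝ)+1)*((k:ℝ)+2)/6 := by
  refine Int.le_induction ?_ ?_
  · norm_num
  · intro k hk ih
    rw [icc_insert k hk, Finset.sum_insert (by simp)]
    have h2 : ∑ b ∈ Finset.Icc (0:ℤ) k, ((b:ℝ)+1)*((((k+1):ℤ):ℝ) - (b:ℝ))
        = ∑ b ∈ Finset.Icc (0:ℤ) k, (((b:ℝ)+1)*((k:ℝ)-(b:ℝ)) + ((b:ℝ)+1)) := by
      apply Finset.sum_congr rfl; intro b _; push_cast; ring
    rw [h2, Finset.sum_add_distrib, ih, aux_sum_gauss k hk]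
    push_cast; ring

theorem expectation_identity_U1U2 {Ω : Type*} [MeasurableSpace Ω]
    (μ : Measure Ω) [IsProbabilityMeasure μ]
    (X : Set Ω) (hX : MeasurableSet X) (hXpos : 0 < μ X)
    (np nm nn : Ω → ℤ) (hnp : Measurable np) (hnm : Measurable nm) (hnn : Measurable nn)
    (horder : ∀ ω, nm ω ≤ 0 ∧ 0 ≤ np ω)
    (hU1 : ∀ a b : ℤ, a ≤ 0 → 0 ≤ b → ∀ j ∈ Set.Icc a b,
      (μ (X ∩ {ω | np ω = b} ∩ {ω | nm ω = a} ∩ {ω | nn ω = j})).toReal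
        = (μ (X ∩ {ω | np ω = b} ∩ {ω | nm ω = a})).toReal / ((b : ℝ) - (a : ℝ) + 1))
    (hU2 : ∀ k : ℤ, 0 ≤ k → ∀ j ∈ Set.Icc (0 : ℤ) k,
      (μ (X ∩ {ω | np ω - nm ω = k} ∩ {ω | np ω = j})).toReal
        = (μ (X ∩ {ω | np ω - nm ω = k})).toReal / ((k : ℝ) + 1))
    (hexch : ∀ a b : ℤ,
      μ (X ∩ {ω | np ω = a} ∩ {ω | -nm ω = b})
        = μ (X ∩ {ω | np ω = b} ∩ {ω | -nm ω = a}))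
    (hint1 : Integrable (fun ω => ((np ω : ℝ) + 1) * (if nn ω < 0 then 1 else 0))
      (μ.restrict X))
    (hint2 : Integrable (fun ω =>
        ((np ω : ℝ) - (nm ω : ℝ) + 2) * ((np ω : ℝ) - (nm ω : ℝ))
          / ((np ω : ℝ) - (nm ω : ℝ) + 1)) (μ.restrict X)) :
    ∫ ω in X, ((np ω : ℝ) + 1) * (if nn ω < 0 then 1 else 0) ∂μ
      = (1 / 6) * ∫ ω in X,
          ((np ω : ℝ) - (nm ω : ℝ) + 2) * ((np ω : ℝ) - (nm ω : ℝ))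
            / ((np ω : ℝ) - (nm ω : ℝ) + 1) ∂μ := by
  classical
  -- measurability of basic sets
  have hSPb : ∀ b : ℤ, MeasurableSet {ω | np ω = b} := fun b => hnp (measurableSet_singleton b)
  have hSMa : ∀ a : ℤ, MeasurableSet {ω | nm ω = a} := fun a => hnm (measurableSet_singleton a)
  have hSJ : ∀ j : ℤ, MeasurableSet {ω | nn ω = j} := fun j => hnn (measurableSet_singleton j)
  have hSN : MeasurableSet {ω | nn ω < 0} := hnn measurableSet_Iio
  have hSK : ∀ k : ℤ, MeasurableSet {ω | np ω - nm ω = k} :=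
    fun k => (hnp.sub hnm) (measurableSet_singleton k)
  -- μ of negative k slice is zero
  have hμkneg : ∀ k : ℤ, k < 0 → μ (X ∩ {ω | np ω - nm ω = k}) = 0 := by
    intro k hk
    have : X ∩ {ω | np ω - nm ω = k} = ∅ := by
      ext ω
      simp only [Set.mem_inter_iff, Set.mem_setOf_eq, Set.mem_empty_iff_false, iff_false]
      rintro ⟨-, h⟩
      have := horder ω; omega
    rw [this, measure_empty]
  -- Lemma Z : fibers of nn outside [a,b] are null
  have hZ : ∀ a b : ℤ, a ≤ 0 → 0 ≤ b → ∀ j : ℤ, j ∉ Set.Icc a b →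
      μ (X ∩ {ω | np ω = b} ∩ {ω | nm ω = a} ∩ {ω | nn ω = j}) = 0 := by
    intro a b ha hb j hj
    have hSmeas : MeasurableSet (X ∩ {ω | np ω = b} ∩ {ω | nm ω = a}) :=
      (hX.inter (hSPb b)).inter (hSMa a)
    have hdisj : (↑(Finset.Icc a b) : Set ℤ).PairwiseDisjoint
        (fun j' => X ∩ {ω | np ω = b} ∩ {ω | nm ω = a} ∩ {ω | nn ω = j'}) := by
      intro x _ y _ hxy
      refine Set.disjoint_left.mpr ?_
      rintro ω ⟨-, hx⟩ ⟨-, hy⟩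
      exact hxy (hx.symm.trans hy)
    have hUm : μ (⋃ j' ∈ Finset.Icc a b,
          X ∩ {ω | np ω = b} ∩ {ω | nm ω = a} ∩ {ω | nn ω = j'})
        = ∑ j' ∈ Finset.Icc a b,
            μ (X ∩ {ω | np ω = b} ∩ {ω | nm ω = a} ∩ {ω | nn ω = j'}) :=
      measure_biUnion_finset hdisj (fun j' _ => hSmeas.inter (hSJ j'))
    have hbapos : (0:ℝ) < (b:ℝ) - (a:ℝ) + 1 := by
      have hb' : (0:ℝ) ≤ (b:ℝ) := by exact_mod_cast hb
      have ha' : (a:ℝ) ≤ 0 := by exact_mod_cast ha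
      linarith
    have hcard : (((Finset.Icc a b).card : ℕ) : ℝ) = (b:ℝ) - (a:ℝ) + 1 := by
      rw [Int.card_Icc]
      have h1 : ((b + 1 - a).toNat : ℤ) = b + 1 - a := Int.toNat_of_nonneg (by omega)
      have h2 := congrArg (fun z : ℤ => (z : ℝ)) h1
      push_cast at h2
      linarith
    have htot : (μ (⋃ j' ∈ Finset.Icc a b,
          X ∩ {ω | np ω = b} ∩ {ω | nm ω = a} ∩ {ω | nn ω = j'})).toReal
        = (μ (X ∩ {ω | np ω = b} ∩ {ω | nm ω = a})).toReal := by
      rw [hUm, ENNReal.toReal_sum (fun _ _ => measure_ne_top μ _)]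
      have hcongr : ∀ j' ∈ Finset.Icc a b,
          (μ (X ∩ {ω | np ω = b} ∩ {ω | nm ω = a} ∩ {ω | nn ω = j'})).toReal
            = (μ (X ∩ {ω | np ω = b} ∩ {ω | nm ω = a})).toReal / ((b:ℝ) - (a:ℝ) + 1) := by
        intro j' hj'
        exact hU1 a b ha hb j' (by simpa [Set.mem_Icc] using Finset.mem_Icc.mp hj')
      rw [Finset.sum_congr rfl hcongr, Finset.sum_const, nsmul_eq_mul, hcard]
      field_simp
    have hUS : μ (⋃ j' ∈ Finset.Icc a b,
          X ∩ {ω | np ω = b} ∩ {ω | nm ω = a} ∩ {ω | nn ω = j'})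
        = μ (X ∩ {ω | np ω = b} ∩ {ω | nm ω = a}) :=
      (ENNReal.toReal_eq_toReal_iff' (measure_ne_top μ _) (measure_ne_top μ _)).mp htot
    have hsub : (⋃ j' ∈ Finset.Icc a b,
          X ∩ {ω | np ω = b} ∩ {ω | nm ω = a} ∩ {ω | nn ω = j'})
        ⊆ X ∩ {ω | np ω = b} ∩ {ω | nm ω = a} :=
      Set.iUnion₂_subset fun j' _ => Set.inter_subset_left
    have hUmeas : MeasurableSet (⋃ j' ∈ Finset.Icc a b,
          X ∩ {ω | np ω = b} ∩ {ω | nm ω = a} ∩ {ω | nn ω = j'}) :=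
      (Finset.Icc a b).measurableSet_biUnion (fun j' _ => hSmeas.inter (hSJ j'))
    have hdiff : μ ((X ∩ {ω | np ω = b} ∩ {ω | nm ω = a}) \
          ⋃ j' ∈ Finset.Icc a b,
            X ∩ {ω | np ω = b} ∩ {ω | nm ω = a} ∩ {ω | nn ω = j'}) = 0 := by
      rw [measure_diff hsub hUmeas.nullMeasurableSet (measure_ne_top μ _), hUS, tsub_self]
    apply measure_mono_null _ hdiff
    rintro ω ⟨hω, hωj⟩
    refine ⟨hω, ?_⟩
    intro hmem
    simp only [Set.mem_iUnion] at hmem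
    obtain ⟨j', hj', hωj'⟩ := hmem
    have : nn ω = j' := hωj'.2
    have hje : nn ω = j := hωj
    apply hj
    rw [Set.mem_Icc]
    have := Finset.mem_Icc.mp hj'
    omega
  -- Lemma N : measure of negative part
  have hN : ∀ a b : ℤ, a ≤ 0 → 0 ≤ b →
      (μ (X ∩ {ω | np ω = b} ∩ {ω | nm ω = a} ∩ {ω | nn ω < 0})).toReal
        = (-(a:ℝ)) * (μ (X ∩ {ω | np ω = b} ∩ {ω | nm ω = a})).toReal
            / ((b:ℝ) - (a:ℝ) + 1) := by
    intro a b ha hb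
    have hSmeas : MeasurableSet (X ∩ {ω | np ω = b} ∩ {ω | nm ω = a}) :=
      (hX.inter (hSPb b)).inter (hSMa a)
    -- the union over j ∈ [a, -1]
    have hdisj : (↑(Finset.Icc a (-1:ℤ)) : Set ℤ).PairwiseDisjoint
        (fun j' => X ∩ {ω | np ω = b} ∩ {ω | nm ω = a} ∩ {ω | nn ω = j'}) := by
      intro x _ y _ hxy
      refine Set.disjoint_left.mpr ?_
      rintro ω ⟨-, hx⟩ ⟨-, hy⟩
      exact hxy (hx.symm.trans hy)
    have hUm : μ (⋃ j' ∈ Finset.Icc a (-1:ℤ),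
          X ∩ {ω | np ω = b} ∩ {ω | nm ω = a} ∩ {ω | nn ω = j'})
        = ∑ j' ∈ Finset.Icc a (-1:ℤ),
            μ (X ∩ {ω | np ω = b} ∩ {ω | nm ω = a} ∩ {ω | nn ω = j'}) :=
      measure_biUnion_finset hdisj (fun j' _ => hSmeas.inter (hSJ j'))
    -- the union equals the set with nn < 0 up to null
    have hkey : μ (X ∩ {ω | np ω = b} ∩ {ω | nm ω = a} ∩ {ω | nn ω < 0})
        = μ (⋃ j' ∈ Finset.Icc a (-1:ℤ),
            X ∩ {ω | np ω = b} ∩ {ω | nm ω = a} ∩ {ω | nn ω = j'}) := by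
      apply le_antisymm
      · -- ≤ : difference is null
        have hnull : μ ((X ∩ {ω | np ω = b} ∩ {ω | nm ω = a} ∩ {ω | nn ω < 0}) \
              ⋃ j' ∈ Finset.Icc a (-1:ℤ),
                X ∩ {ω | np ω = b} ∩ {ω | nm ω = a} ∩ {ω | nn ω = j'}) = 0 := by
          have hbig : μ (⋃ j : ℤ,
              if j ∈ Set.Icc a b then (∅ : Set Ω)
              else X ∩ {ω | np ω = b} ∩ {ω | nm ω = a} ∩ {ω | nn ω = j}) = 0 := by
            apply measure_iUnion_null
            intro j
            by_cases hjc : j ∈ Set.Icc a b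
            · rw [if_pos hjc, measure_empty]
            · rw [if_neg hjc]; exact hZ a b ha hb j hjc
          refine measure_mono_null ?_ hbig
          rintro ω ⟨⟨hω, hωn⟩, hnot⟩
          simp only [Set.mem_iUnion]
          refine ⟨nn ω, ?_⟩
          have hjIcc : nn ω ∉ Set.Icc a b := by
            intro hc
            apply hnot
            simp only [Set.mem_iUnion]
            refine ⟨nn ω, ?_, hω, rfl⟩
            rw [Finset.mem_Icc]
            rw [Set.mem_Icc] at hc
            have : nn ω < 0 := hωn
            omega
          rw [if_neg hjIcc]
          exact ⟨hω, rfl⟩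
        calc μ (X ∩ {ω | np ω = b} ∩ {ω | nm ω = a} ∩ {ω | nn ω < 0})
            ≤ μ ((⋃ j' ∈ Finset.Icc a (-1:ℤ),
                X ∩ {ω | np ω = b} ∩ {ω | nm ω = a} ∩ {ω | nn ω = j'}) ∪
              ((X ∩ {ω | np ω = b} ∩ {ω | nm ω = a} ∩ {ω | nn ω < 0}) \
                ⋃ j' ∈ Finset.Icc a (-1:ℤ),
                  X ∩ {ω | np ω = b} ∩ {ω | nm ω = a} ∩ {ω | nn ω = j'})) := by
              apply measure_mono
              intro ω hω
              by_cases hc : ω ∈ ⋃ j' ∈ Finset.Icc a (-1:ℤ),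
                  X ∩ {ω | np ω = b} ∩ {ω | nm ω = a} ∩ {ω | nn ω = j'}
              · exact Or.inl hc
              · exact Or.inr ⟨hω, hc⟩
          _ ≤ μ (⋃ j' ∈ Finset.Icc a (-1:ℤ),
                X ∩ {ω | np ω = b} ∩ {ω | nm ω = a} ∩ {ω | nn ω = j'}) + 0 := by
              rw [← hnull]; exact measure_union_le _ _
          _ = _ := by rw [add_zero]
      · apply measure_mono
        refine Set.iUnion₂_subset fun j' hj' => ?_
        rintro ω ⟨hω, hωj⟩
        refine ⟨hω, ?_⟩
        have h1 := Finset.mem_Icc.mp hj'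
        have h2 : nn ω = j' := hωj
        show nn ω < 0
        omega
    have hcard : (((Finset.Icc a (-1:ℤ)).card : ℕ) : ℝ) = -(a:ℝ) := by
      rw [Int.card_Icc]
      have h1 : ((-1:ℤ) + 1 - a) = -a := by ring
      rw [h1]
      have h2 : ((-a).toNat : ℤ) = -a := Int.toNat_of_nonneg (by omega)
      have h3 := congrArg (fun z : ℤ => (z : ℝ)) h2
      push_cast at h3
      linarith
    rw [hkey, hUm, ENNReal.toReal_sum (fun _ _ => measure_ne_top μ _)]
    have hcongr : ∀ j' ∈ Finset.Icc a (-1:ℤ),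
        (μ (X ∩ {ω | np ω = b} ∩ {ω | nm ω = a} ∩ {ω | nn ω = j'})).toReal
          = (μ (X ∩ {ω | np ω = b} ∩ {ω | nm ω = a})).toReal / ((b:ℝ) - (a:ℝ) + 1) := by
      intro j' hj'
      refine hU1 a b ha hb j' ?_
      rw [Set.mem_Icc]
      have := Finset.mem_Icc.mp hj'
      omega
    rw [Finset.sum_congr rfl hcongr, Finset.sum_const, nsmul_eq_mul, hcard]
    ring
  -- Lemma M2 via hU2
  have hM2 : ∀ a b : ℤ, a ≤ 0 → 0 ≤ b →
      (μ (X ∩ {ω | np ω = b} ∩ {ω | nm ω = a})).toReal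
        = (μ (X ∩ {ω | np ω - nm ω = b - a})).toReal / ((b:ℝ) - (a:ℝ) + 1) := by
    intro a b ha hb
    have hset : X ∩ {ω | np ω - nm ω = b - a} ∩ {ω | np ω = b}
        = X ∩ {ω | np ω = b} ∩ {ω | nm ω = a} := by
      ext ω
      simp only [Set.mem_inter_iff, Set.mem_setOf_eq]
      constructor
      · rintro ⟨⟨h1, h2⟩, h3⟩; exact ⟨⟨h1, h3⟩, by omega⟩
      · rintro ⟨⟨h1, h2⟩, h3⟩; exact ⟨⟨h1, by omega⟩, h2⟩
    have := hU2 (b - a) (by omega) b (by rw [Set.mem_Icc]; omega)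
    rw [hset] at this
    rw [this]
    have : (((b - a : ℤ)):ℝ) + 1 = (b:ℝ) - (a:ℝ) + 1 := by push_cast; ring
    rw [this]
  
  -- function g and pushforward ν₂ for the RHS
  set g : ℤ → ℝ := fun k => ((k:ℝ) + 2) * (k:ℝ) / ((k:ℝ) + 1) with hg
  have hK : Measurable (fun ω => np ω - nm ω) := hnp.sub hnm
  set ν₂ : Measure ℤ := (μ.restrict X).map (fun ω => np ω - nm ω) with hν₂def
  have hν₂ : ∀ k : ℤ, ν₂ {k} = μ (X ∩ {ω | np ω - nm ω = k}) := by
    intro k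
    rw [hν₂def, Measure.map_apply hK (measurableSet_singleton k),
      Measure.restrict_apply (hK (measurableSet_singleton k))]
    congr 1
    ext ω
    simp only [Set.mem_inter_iff, Set.mem_preimage, Set.mem_singleton_iff, Set.mem_setOf_eq]
    tauto
  have hcomp2 : (fun ω => ((np ω : ℝ) - (nm ω : ℝ) + 2) * ((np ω : ℝ) - (nm ω : ℝ))
      / ((np ω : ℝ) - (nm ω : ℝ) + 1)) = (fun ω => g (np ω - nm ω)) := by
    funext ω
    rw [hg]
    push_cast
    ring
  have hgint : Integrable g ν₂ := by
    rw [hν₂def]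
    refine (integrable_map_measure (measurable_of_countable g).aestronglyMeasurable
      hK.aemeasurable).mpr ?_
    exact hint2.congr (Filter.Eventually.of_forall fun ω => by
      simp only [Function.comp, hg]; push_cast; ring)
  have hRHS : ∫ ω in X, ((np ω : ℝ) - (nm ω : ℝ) + 2) * ((np ω : ℝ) - (nm ω : ℝ))
        / ((np ω : ℝ) - (nm ω : ℝ) + 1) ∂μ
      = ∑' k : ℤ, (ν₂ {k}).toReal • g k := by
    rw [show (∫ ω in X, ((np ω : ℝ) - (nm ω : ℝ) + 2) * ((np ω : ℝ) - (nm ω : ℝ))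
        / ((np ω : ℝ) - (nm ω : ℝ) + 1) ∂μ) = ∫ ω in X, g (np ω - nm ω) ∂μ from by
      rw [hcomp2]]
    rw [hν₂def, ← integral_map hK.aemeasurable
      (measurable_of_countable g).aestronglyMeasurable]
    exact integral_countable' (by rw [← hν₂def]; exact hgint)
  -- summability of ‖g k‖ * ν₂{k}
  have hsumg : Summable (fun k : ℤ => ‖g k‖ * (ν₂ {k}).toReal) := by
    have h1 : ∫⁻ k, ‖g k‖₊ ∂ν₂ ≠ ⊤ := hgint.2.ne
    rw [lintegral_countable'] at h1
    refine (ENNReal.summable_toReal h1).congr ?_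
    intro k
    rw [ENNReal.toReal_mul]
    simp
  -- LHS : rewrite as integral over X ∩ {nn < 0}
  have hind : (fun ω => ((np ω : ℝ) + 1) * (if nn ω < 0 then 1 else 0))
      = (fun ω => Set.indicator {ω' | nn ω' < 0} (fun ω' => (np ω' : ℝ) + 1) ω) := by
    funext ω
    by_cases h : nn ω < 0
    · simp [Set.indicator, h]
    · simp [Set.indicator, h]
  have hLHS1 : ∫ ω in X, ((np ω : ℝ) + 1) * (if nn ω < 0 then 1 else 0) ∂μ
      = ∫ ω, ((np ω : ℝ) + 1) ∂(μ.restrict ({ω | nn ω < 0} ∩ X)) := by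
    rw [show (∫ ω in X, ((np ω : ℝ) + 1) * (if nn ω < 0 then 1 else 0) ∂μ)
        = ∫ ω, Set.indicator {ω' | nn ω' < 0} (fun ω' => (np ω' : ℝ) + 1) ω
            ∂(μ.restrict X) from by rw [← hind]]
    rw [integral_indicator hSN, ← Measure.restrict_restrict hSN]
  have hintg : Integrable (fun ω => (np ω : ℝ) + 1) (μ.restrict ({ω | nn ω < 0} ∩ X)) := by
    rw [← Measure.restrict_restrict hSN]
    rw [hind] at hint1
    exact (integrable_indicator_iff hSN).mp hint1
  -- pushforward by (np, nm)
  have hP : Measurable (fun ω => (np ω, nm ω)) := hnp.prodMk hnm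
  set ν₁ : Measure (ℤ × ℤ) := (μ.restrict ({ω | nn ω < 0} ∩ X)).map (fun ω => (np ω, nm ω))
    with hν₁def
  have hν₁ : ∀ p : ℤ × ℤ, ν₁ {p}
      = μ (X ∩ {ω | np ω = p.1} ∩ {ω | nm ω = p.2} ∩ {ω | nn ω < 0}) := by
    intro p
    rw [hν₁def, Measure.map_apply hP (measurableSet_singleton p),
      Measure.restrict_apply (hP (measurableSet_singleton p))]
    congr 1
    ext ω
    simp only [Set.mem_inter_iff, Set.mem_preimage, Set.mem_singleton_iff, Set.mem_setOf_eq,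
      Prod.ext_iff]
    tauto
  have hLHS2 : ∫ ω, ((np ω : ℝ) + 1) ∂(μ.restrict ({ω | nn ω < 0} ∩ X))
      = ∑' p : ℤ × ℤ, (ν₁ {p}).toReal • ((p.1 : ℝ) + 1) := by
    have hFmeas : Measurable (fun p : ℤ × ℤ => (p.1 : ℝ) + 1) := measurable_of_countable _
    have hIF : Integrable (fun p : ℤ × ℤ => (p.1 : ℝ) + 1) ν₁ := by
      rw [hν₁def]
      exact (integrable_map_measure hFmeas.aestronglyMeasurable hP.aemeasurable).mpr hintg
    rw [show (∫ ω, ((np ω : ℝ) + 1) ∂(μ.restrict ({ω | nn ω < 0} ∩ X)))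
        = ∫ p : ℤ × ℤ, ((p.1 : ℝ) + 1) ∂ν₁ from by
      rw [hν₁def, integral_map hP.aemeasurable hFmeas.aestronglyMeasurable]]
    exact integral_countable' hIF
  -- cleaned summand
  set h' : ℤ × ℤ → ℝ := fun q =>
    if 0 ≤ q.2 ∧ q.2 ≤ q.1 then
      ((q.2 : ℝ) + 1) * ((q.1 : ℝ) - (q.2 : ℝ))
        * (μ (X ∩ {ω | np ω - nm ω = q.1})).toReal / (((q.1 : ℝ) + 1)^2)
    else 0 with hh'
  have hclean : ∀ p : ℤ × ℤ, (ν₁ {p}).toReal • ((p.1 : ℝ) + 1) = h' (p.1 - p.2, p.1) := by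
    rintro ⟨b, a⟩
    simp only [smul_eq_mul]
    by_cases hc : a ≤ 0 ∧ 0 ≤ b
    · obtain ⟨ha, hb⟩ := hc
      have hbapos : (0:ℝ) < (b:ℝ) - (a:ℝ) + 1 := by
        have hb' : (0:ℝ) ≤ (b:ℝ) := by exact_mod_cast hb
        have ha' : (a:ℝ) ≤ 0 := by exact_mod_cast ha
        linarith
      rw [hν₁, hN a b ha hb, hM2 a b ha hb, hh']
      simp only []
      rw [if_pos (by constructor <;> omega)]
      have hcast1 : (((b - a : ℤ)) : ℝ) = (b:ℝ) - (a:ℝ) := by push_cast; ring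
      rw [hcast1]
      field_simp
      ring
    · have hzero : μ (X ∩ {ω | np ω = b} ∩ {ω | nm ω = a} ∩ {ω | nn ω < 0}) = 0 := by
        have : X ∩ {ω | np ω = b} ∩ {ω | nm ω = a} ∩ {ω | nn ω < 0} = ∅ := by
          ext ω
          simp only [Set.mem_inter_iff, Set.mem_setOf_eq, Set.mem_empty_iff_false, iff_false]
          rintro ⟨⟨⟨-, h1⟩, h2⟩, -⟩
          have := horder ω
          omega
        rw [this, measure_empty]
      rw [hν₁]
      simp only [hzero, ENNReal.toReal_zero, zero_mul, hh']
      rw [if_neg (by omega)]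
  -- reindexing (b, a) ↦ (b - a, b)
  have hreindex : ∑' p : ℤ × ℤ, h' (p.1 - p.2, p.1) = ∑' q : ℤ × ℤ, h' q := by
    exact Equiv.tsum_eq
      ⟨fun p => (p.1 - p.2, p.1), fun q => (q.2, q.2 - q.1),
        fun p => by simp [Prod.ext_iff], fun q => by simp [Prod.ext_iff]⟩ h'
  -- nonnegativity of h'
  have hpos : 0 ≤ h' := by
    intro q
    rw [hh']
    dsimp only
    split
    · rename_i hq
      apply div_nonneg
      · apply mul_nonneg
        apply mul_nonneg
        · have : (0:ℝ) ≤ (q.2 : ℝ) := by exact_mod_cast hq.1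
          linarith
        · have : (q.2:ℝ) ≤ (q.1:ℝ) := by exact_mod_cast hq.2
          linarith
        · exact ENNReal.toReal_nonneg
      · positivity
    · exact le_refl 0
  
  -- slices are summable (finite support)
  have hslice : ∀ k : ℤ, Summable (fun b : ℤ => h' (k, b)) := by
    intro k
    apply summable_of_ne_finset_zero (s := Finset.Icc (0:ℤ) k)
    intro b hb
    rw [hh']
    dsimp only
    rw [if_neg]
    intro hcond
    exact hb (Finset.mem_Icc.mpr ⟨hcond.1, hcond.2⟩)
  -- inner sums
  have hinner : ∀ k : ℤ, (∑' b : ℤ, h' (k, b))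
      = if 0 ≤ k then (μ (X ∩ {ω | np ω - nm ω = k})).toReal
          * ((k:ℝ) * ((k:ℝ) + 2)) / (6 * ((k:ℝ) + 1)) else 0 := by
    intro k
    by_cases hk : 0 ≤ k
    · rw [if_pos hk]
      rw [tsum_eq_sum (s := Finset.Icc (0:ℤ) k) (fun b hb => by
        rw [hh']; dsimp only; rw [if_neg]
        intro hcond
        exact hb (Finset.mem_Icc.mpr ⟨hcond.1, hcond.2⟩))]
      have hterm : ∀ b ∈ Finset.Icc (0:ℤ) k, h' (k, b)
          = ((μ (X ∩ {ω | np ω - nm ω = k})).toReal / (((k:ℝ) + 1)^2))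
              * (((b:ℝ) + 1) * ((k:ℝ) - (b:ℝ))) := by
        intro b hb
        rw [hh']
        dsimp only
        rw [if_pos (Finset.mem_Icc.mp hb)]
        ring
      rw [Finset.sum_congr rfl hterm, ← Finset.mul_sum, aux_sum_cubic k hk]
      have hkpos : (0:ℝ) < (k:ℝ) + 1 := by
        have : (0:ℝ) ≤ (k:ℝ) := by exact_mod_cast hk
        linarith
      field_simp
    · rw [if_neg hk]
      have : ∀ b : ℤ, h' (k, b) = 0 := by
        intro b
        rw [hh']
        dsimp only
        rw [if_neg]
        intro hcond
        omega
      rw [tsum_congr this, tsum_zero]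
  -- marginal summability
  have hmarg : Summable (fun k : ℤ => ∑' b : ℤ, h' (k, b)) := by
    apply Summable.of_nonneg_of_le (fun k => tsum_nonneg (fun b => hpos (k, b))) _ hsumg
    intro k
    rw [hinner k]
    by_cases hk : 0 ≤ k
    · rw [if_pos hk]
      have hkpos : (0:ℝ) < (k:ℝ) + 1 := by
        have : (0:ℝ) ≤ (k:ℝ) := by exact_mod_cast hk
        linarith
      have hg0 : 0 ≤ g k := by
        rw [hg]
        have : (0:ℝ) ≤ (k:ℝ) := by exact_mod_cast hk
        positivity
      rw [Real.norm_of_nonneg hg0, hν₂ k, hg]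
      have hM0 : 0 ≤ (μ (X ∩ {ω | np ω - nm ω = k})).toReal := ENNReal.toReal_nonneg
      rw [div_le_iff₀ (by positivity)]
      dsimp only
      have hknn : (0:ℝ) ≤ (k:ℝ) := by exact_mod_cast hk
      have heq : ((k:ℝ) + 2) * (k:ℝ) / ((k:ℝ) + 1) * (μ (X ∩ {ω | np ω - nm ω = k})).toReal
          * (6 * ((k:ℝ) + 1))
          = 6 * (((k:ℝ) + 2) * (k:ℝ) * (μ (X ∩ {ω | np ω - nm ω = k})).toReal) := by
        field_simp
      rw [heq]
      nlinarith [mul_nonneg (mul_nonneg hM0 hknn) (by linarith : (0:ℝ) ≤ (k:ℝ) + 2)]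
    · rw [if_neg hk]
      positivity
  have hsum' : Summable h' := (summable_prod_of_nonneg hpos).mpr ⟨hslice, hmarg⟩
  -- final assembly
  rw [hLHS1, hLHS2, tsum_congr hclean, hreindex, Summable.tsum_prod' hsum' hslice,
    tsum_congr hinner, hRHS, ← tsum_mul_left]
  apply tsum_congr
  intro k
  by_cases hk : 0 ≤ k
  · rw [if_pos hk, hν₂ k, smul_eq_mul, hg]
    have hkpos : (0:ℝ) < (k:ℝ) + 1 := by
      have : (0:ℝ) ≤ (k:ℝ) := by exact_mod_cast hk
      linarith
    have hne : ((k:ℝ) + 1) ≠ 0 := ne_of_gt hkpos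
    field_simp
    try exact Or.inl trivial
  · rw [if_neg hk, hν₂ k, hμkneg k (by omega)]
    simp
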